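/- arXiv:2007.07025 — 5 statements merged into one kernel-verified Lean document; each statement's English description precedes it below -/
import Mathlib

section
/- Let 0 < p ≤ 1 and 0 ≤ q ≤ 1/2 be real numbers. Then p · 1 + (1 - p) · exp(q) ≤ exp(-(3/2) · q · ln p). -/
theorem technical_lemma (p q : ℝ) (hp0 : 0 < p) (hp1 : p ≤ 1)
    (hq0 : 0 ≤ q) (hq : q ≤ 1/2) :
    p * 1 + (1 - p) * Real.exp q ≤ Real.exp (-(3/2) * q * Real.log p) := by
  have hlnp : Real.log p ≤ p - 1 := Real.log_le_sub_one_of_pos hp0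
  have hln0 : Real.log p ≤ 0 := Real.log_nonpos hp0.le hp1
  have hA : 1 - p ≤ -Real.log p := by linarith
  have hehalf : Real.exp (1/2) ≤ 7/4 := by
    have h1 : Real.exp (1/2) * Real.exp (1/2) = Real.exp 1 := by
      rw [← Real.exp_add]; norm_num
    nlinarith [Real.exp_pos (1/2), Real.exp_one_lt_d9]
  have hconv := convexOn_exp.2 (Set.mem_univ (0:ℝ)) (Set.mem_univ ((1:ℝ)/2))
    (show (0:ℝ) ≤ 1 - 2*q by linarith) (show (0:ℝ) ≤ 2*q by linarith)
    (show (1 - 2*q) + 2*q = 1 by ring)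
  simp only [smul_eq_mul, mul_zero, zero_add, Real.exp_zero, mul_one] at hconv
  have hq2 : Real.exp q ≤ (1 - 2*q) + 2*q * Real.exp (1/2) := by
    have : (2*q) * (1/2 : ℝ) = q := by ring
    rw [this] at hconv; linarith
  have hB : Real.exp q - 1 ≤ (3/2) * q := by nlinarith
  have hE1 : (1:ℝ) ≤ Real.exp q := Real.one_le_exp hq0
  have hmul : (1 - p) * (Real.exp q - 1) ≤ (-Real.log p) * ((3/2) * q) :=
    mul_le_mul hA hB (by linarith) (by linarith)
  calc p * 1 + (1 - p) * Real.exp q = 1 + (1 - p) * (Real.exp q - 1) := by ring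
    _ ≤ Real.exp ((1 - p) * (Real.exp q - 1)) := by
        linarith [Real.add_one_le_exp ((1 - p) * (Real.exp q - 1))]
    _ ≤ Real.exp (-(3/2) * q * Real.log p) := by
        apply Real.exp_le_exp.2
        nlinarith [hmul]
end

section
/- Let c ≥ 1 and n ≥ 2 be real numbers, and define y_0 = 0, y_{k+1} = (1 + 1/c)·y_k + 1/(n·c). Then there exists a natural number K ≤ c + 2·c·ln(n) + 1 such that y_K ≥ 1. -/
/-!
Unrolling the recurrence gives `y k = ((1 + 1/c)^k - 1) / n`, so `y K ≥ 1` as soon as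
`(1 + 1/c)^K ≥ n + 1`. Since `log (1 + 1/c) ≥ 1/(c + 1)` and `log (n + 1) ≤ log n + 1/2`,
taking logarithms shows that any `K ≥ c + 2 c log n` suffices.
-/

open Finset Real

theorem eq_mul_geom_sum_of_eq_mul_add {R : Type*} [CommSemiring R] (q b : R) (y : ℕ → R)
    (h0 : y 0 = 0) (hrec : ∀ k, y (k + 1) = q * y k + b) (k : ℕ) :
    y k = b * ∑ i ∈ range k, q ^ i := by
  induction k with
  | zero => simp [h0]
  | succ k ih => rw [hrec, ih, geom_sum_succ]; ring

theorem inv_add_one_le_log_one_add_inv {c : ℝ} (hc : 0 < c) : (c + 1)⁻¹ ≤ log (1 + c⁻¹) := by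
  have h := one_sub_inv_le_log_of_pos (x := 1 + c⁻¹) (by positivity)
  have hq : 1 - (1 + c⁻¹)⁻¹ = (c + 1)⁻¹ := by field_simp; ring
  rwa [hq] at h

theorem log_add_one_le_log_add_inv {n : ℝ} (hn : 0 < n) : log (n + 1) ≤ log n + n⁻¹ := by
  have hsplit : n + 1 = n * (1 + n⁻¹) := by field_simp
  rw [hsplit, log_mul hn.ne' (by positivity)]
  linarith [log_le_sub_one_of_pos (x := 1 + n⁻¹) (by positivity)]

theorem add_one_le_one_add_inv_pow {c n : ℝ} (hc : 1 ≤ c) (hn : 2 ≤ n) {K : ℕ}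
    (hK : c + 2 * c * log n ≤ K) : n + 1 ≤ (1 + c⁻¹) ^ K := by
  have hlogn : 0 ≤ log n := log_nonneg (by linarith)
  have hq := inv_add_one_le_log_one_add_inv (by linarith : (0 : ℝ) < c)
  have hgrowth : log n + 1 / 2 ≤ K * (c + 1)⁻¹ := by
    rw [← div_eq_mul_inv, le_div_iff₀ (by linarith)]
    nlinarith
  rw [← log_le_log_iff (by linarith) (by positivity), log_pow]
  calc log (n + 1) ≤ log n + n⁻¹ := log_add_one_le_log_add_inv (by linarith)
    _ ≤ log n + 1 / 2 := by gcongr; rw [inv_le_comm₀ (by linarith) (by norm_num)]; linarith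
    _ ≤ K * (c + 1)⁻¹ := hgrowth
    _ ≤ K * log (1 + c⁻¹) := by gcongr

theorem augmentation_reaches_one (c n : ℝ) (hc : 1 ≤ c) (hn : 2 ≤ n)
    (y : ℕ → ℝ) (h0 : y 0 = 0)
    (hrec : ∀ k, y (k + 1) = (1 + 1 / c) * y k + 1 / (n * c)) :
    ∃ K : ℕ, (K : ℝ) ≤ c + 2 * c * Real.log n + 1 ∧ 1 ≤ y K := by
  have hc0 : 0 < c := by linarith
  have hn0 : 0 < n := by linarith
  have hclosed : ∀ k, y k = ((1 + c⁻¹) ^ k - 1) / n := fun k => by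
    rw [eq_mul_geom_sum_of_eq_mul_add _ _ y h0 hrec, geom_sum_eq (by simp [hc0.ne'])]
    field_simp
    ring
  have hlogn : 0 ≤ log n := log_nonneg (by linarith)
  set x := c + 2 * c * log n
  refine ⟨⌈x⌉₊, (Nat.ceil_lt_add_one (by positivity)).le, ?_⟩
  rw [hclosed, le_div_iff₀ hn0]
  linarith [add_one_le_one_add_inv_pow hc hn (Nat.le_ceil x)]
end

section
/- Let T be a finite set of nonnegative real numbers containing 0, let x : T → [0,1] and y : T → [0,∞) be functions. Let t* = max{t ∈ T : x(t) > 0} (assume this set is nonempty). Suppose (a) ∑_{t ∈ T} min(x(t), y(t)) ≥ 1, and (b) x(t) = 1 for every t ∈ T with t < t*. Then there exists τ ∈ T such that ∑_{t ∈ T, t ≤ τ} y(t) ≥ 1/2 and ∑_{t ∈ T} t·x(t) ≥ τ/2. -/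
theorem good_distance (T : Finset ℝ) (x y : ℝ → ℝ)
    (hT0 : (0 : ℝ) ∈ T) (hTnn : ∀ t ∈ T, 0 ≤ t)
    (hx0 : ∀ t ∈ T, 0 ≤ x t) (hx1 : ∀ t ∈ T, x t ≤ 1) (hy : ∀ t ∈ T, 0 ≤ y t)
    (tstar : ℝ) (htT : tstar ∈ T) (htpos : 0 < x tstar)
    (htmax : ∀ t ∈ T, 0 < x t → t ≤ tstar)
    (hserve : 1 ≤ ∑ t ∈ T, min (x t) (y t))
    (hsat : ∀ t ∈ T, t < tstar → x t = 1) :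
    ∃ τ ∈ T, 1 / 2 ≤ ∑ t ∈ T.filter (fun t => t ≤ τ), y t ∧ τ / 2 ≤ ∑ t ∈ T, t * x t := by
  classical
  have hTne : T.Nonempty := ⟨0, hT0⟩
  set S : Finset ℝ := T.filter (fun t => 1/2 ≤ ∑ t' ∈ T.filter (fun s => s ≤ t), y t') with hS
  have hmaxS : T.max' hTne ∈ S := by
    refine Finset.mem_filter.mpr ⟨T.max'_mem hTne, ?_⟩
    have : T.filter (fun s => s ≤ T.max' hTne) = T := by
      apply Finset.filter_true_of_mem
      intro t ht; exact T.le_max' t ht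
    rw [this]
    have h1 : (1:ℝ) ≤ ∑ t ∈ T, y t := by
      refine le_trans hserve (Finset.sum_le_sum ?_)
      intro t ht; exact min_le_right _ _
    linarith
  have hSne : S.Nonempty := ⟨_, hmaxS⟩
  set τ := S.min' hSne with hτ
  have hτS : τ ∈ S := S.min'_mem hSne
  have hτT : τ ∈ T := (Finset.mem_filter.mp hτS).1
  have hτpre : 1/2 ≤ ∑ t' ∈ T.filter (fun s => s ≤ τ), y t' := (Finset.mem_filter.mp hτS).2
  refine ⟨τ, hτT, hτpre, ?_⟩
  -- prefix below τ has y-mass < 1/2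
  have hbelow : ∑ t ∈ T.filter (fun s => s < τ), y t < 1/2 := by
    by_cases hP : (T.filter (fun s => s < τ)).Nonempty
    · set m := (T.filter (fun s => s < τ)).max' hP with hm
      have hmmem := (T.filter (fun s => s < τ)).max'_mem hP
      have hmT : m ∈ T := (Finset.mem_filter.mp hmmem).1
      have hmlt : m < τ := (Finset.mem_filter.mp hmmem).2
      have hEq : T.filter (fun s => s ≤ m) = T.filter (fun s => s < τ) := by
        ext t
        simp only [Finset.mem_filter]
        constructor
        · rintro ⟨ht, h⟩; exact ⟨ht, lt_of_le_of_lt h hmlt⟩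
        · rintro ⟨ht, h⟩
          have hmem : t ∈ T.filter (fun s => s < τ) := Finset.mem_filter.mpr ⟨ht, h⟩
          exact ⟨ht, Finset.le_max' _ t hmem⟩
      have hmnot : m ∉ S := by
        intro hmS
        exact absurd (S.min'_le m hmS) (not_le.mpr hmlt)
      have : ¬ (1/2 ≤ ∑ t' ∈ T.filter (fun s => s ≤ m), y t') := by
        intro h; exact hmnot (Finset.mem_filter.mpr ⟨hmT, h⟩)
      rw [hEq] at this
      linarith [this]
    · rw [Finset.not_nonempty_iff_eq_empty.mp hP, Finset.sum_empty]; norm_num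
  -- split the serve sum
  have hsplit : ∑ t ∈ T, min (x t) (y t)
      = ∑ t ∈ T.filter (fun s => s < τ), min (x t) (y t)
        + ∑ t ∈ T.filter (fun s => ¬ s < τ), min (x t) (y t) :=
    (Finset.sum_filter_add_sum_filter_not T _ _).symm
  have h1 : ∑ t ∈ T.filter (fun s => s < τ), min (x t) (y t)
      ≤ ∑ t ∈ T.filter (fun s => s < τ), y t := by
    refine Finset.sum_le_sum ?_
    intro t ht; exact min_le_right _ _
  have habove : 1/2 ≤ ∑ t ∈ T.filter (fun s => ¬ s < τ), min (x t) (y t) := by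
    linarith
  have hτnn : 0 ≤ τ := hTnn τ hτT
  have h2 : τ * (1/2) ≤ ∑ t ∈ T.filter (fun s => ¬ s < τ), t * x t := by
    calc τ * (1/2) ≤ τ * ∑ t ∈ T.filter (fun s => ¬ s < τ), min (x t) (y t) :=
          mul_le_mul_of_nonneg_left habove hτnn
      _ = ∑ t ∈ T.filter (fun s => ¬ s < τ), τ * min (x t) (y t) := Finset.mul_sum _ _ _
      _ ≤ ∑ t ∈ T.filter (fun s => ¬ s < τ), t * x t := by
          refine Finset.sum_le_sum ?_
          intro t ht
          have htT' : t ∈ T := (Finset.mem_filter.mp ht).1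
          have hτt : τ ≤ t := not_lt.mp (Finset.mem_filter.mp ht).2
          have hmin : min (x t) (y t) ≤ x t := min_le_left _ _
          have hminnn : 0 ≤ min (x t) (y t) := le_min (hx0 t htT') (hy t htT')
          calc τ * min (x t) (y t) ≤ t * min (x t) (y t) :=
                mul_le_mul_of_nonneg_right hτt hminnn
            _ ≤ t * x t := mul_le_mul_of_nonneg_left hmin (le_trans hτnn hτt)
  have h3 : ∑ t ∈ T.filter (fun s => ¬ s < τ), t * x t ≤ ∑ t ∈ T, t * x t := by
    refine Finset.sum_le_sum_of_subset_of_nonneg (Finset.filter_subset _ _) ?_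
    intro t ht _
    exact mul_nonneg (hTnn t ht) (hx0 t ht)
  linarith
end

section
/- Proof of the good-distance dichotomy: under the hypotheses of the good-distance lemma, if min(x(t*), y(t*)) < 1/2, then ∑_{t ∈ T, t < t*} min(x(t), y(t)) ≥ 1/2, and consequently for τ = max{t ∈ T : t < t*} one has ∑_{t ∈ T, t ≤ τ} y(t) ≥ 1/2 and x(τ) = 1, hence ∑_{t ∈ T} t·x(t) ≥ τ. -/
theorem good_distance_dichotomy (T : Finset ℝ) (x y : ℝ → ℝ)
    (hT0 : (0 : ℝ) ∈ T) (hTnn : ∀ t ∈ T, 0 ≤ t)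
    (hx0 : ∀ t ∈ T, 0 ≤ x t) (hx1 : ∀ t ∈ T, x t ≤ 1) (hy : ∀ t ∈ T, 0 ≤ y t)
    (tstar : ℝ) (htT : tstar ∈ T) (htpos : 0 < x tstar)
    (htmax : ∀ t ∈ T, 0 < x t → t ≤ tstar)
    (hserve : 1 ≤ ∑ t ∈ T, min (x t) (y t))
    (hsat : ∀ t ∈ T, t < tstar → x t = 1)
    (hmin : min (x tstar) (y tstar) < 1 / 2)
    (τ : ℝ) (hτT : τ ∈ T) (hτlt : τ < tstar)
    (hτmax : ∀ t ∈ T, t < tstar → t ≤ τ) :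
    1 / 2 ≤ ∑ t ∈ T.filter (fun t => t < tstar), min (x t) (y t) ∧
    1 / 2 ≤ ∑ t ∈ T.filter (fun t => t ≤ τ), y t ∧
    x τ = 1 ∧ τ ≤ ∑ t ∈ T, t * x t := by
  have hsplit : ∑ t ∈ T, min (x t) (y t) =
      (∑ t ∈ T.filter (fun t => t < tstar), min (x t) (y t)) +
      ∑ t ∈ T.filter (fun t => ¬ t < tstar), min (x t) (y t) :=
    (Finset.sum_filter_add_sum_filter_not T _ _).symm
  have hrest : ∑ t ∈ T.filter (fun t => ¬ t < tstar), min (x t) (y t) ≤ 1 / 2 := by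
    have : ∀ t ∈ T.filter (fun t => ¬ t < tstar), min (x t) (y t) ≤
        if t = tstar then min (x tstar) (y tstar) else 0 := by
      intro t ht
      simp only [Finset.mem_filter] at ht
      by_cases h : t = tstar
      · simp [h]
      · have hgt : tstar < t := lt_of_le_of_ne (not_lt.1 ht.2) (Ne.symm h)
        have hx : x t ≤ 0 := by
          by_contra hc
          exact absurd (htmax t ht.1 (lt_of_not_ge hc)) (not_le.2 hgt)
        simp only [if_neg h]
        exact le_trans (min_le_left _ _) hx
    calc ∑ t ∈ T.filter (fun t => ¬ t < tstar), min (x t) (y t)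
        ≤ ∑ t ∈ T.filter (fun t => ¬ t < tstar),
            (if t = tstar then min (x tstar) (y tstar) else 0) :=
          Finset.sum_le_sum this
      _ ≤ min (x tstar) (y tstar) := by
          rw [Finset.sum_ite_eq' _ tstar (fun _ => min (x tstar) (y tstar))]
          split <;> simp [le_min htpos.le (hy tstar htT)]
      _ ≤ 1 / 2 := le_of_lt hmin
  have h1 : 1 / 2 ≤ ∑ t ∈ T.filter (fun t => t < tstar), min (x t) (y t) := by
    linarith [hsplit ▸ hserve]
  have hseteq : T.filter (fun t => t < tstar) = T.filter (fun t => t ≤ τ) := by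
    ext t
    simp only [Finset.mem_filter]
    exact ⟨fun ⟨h, h2⟩ => ⟨h, hτmax t h h2⟩, fun ⟨h, h2⟩ => ⟨h, lt_of_le_of_lt h2 hτlt⟩⟩
  have h2 : 1 / 2 ≤ ∑ t ∈ T.filter (fun t => t ≤ τ), y t := by
    rw [← hseteq]
    refine le_trans h1 (Finset.sum_le_sum fun t ht => ?_)
    exact min_le_right _ _
  have h3 : x τ = 1 := hsat τ hτT hτlt
  refine ⟨h1, h2, h3, ?_⟩
  calc τ = τ * x τ := by rw [h3]; ring
    _ ≤ ∑ t ∈ T, t * x t := by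
        apply Finset.single_le_sum (f := fun t => t * x t) (fun t ht => mul_nonneg (hTnn t ht) (hx0 t ht)) hτT
end

section
/- Let ℓ ≥ 2 be a real number, δ ≥ 0, and 0 ≤ q ≤ 1/2 be reals. Set p = ℓ^(−4δ). Then p + (1 − p)·exp(q) ≤ exp(6·q·δ·ln ℓ). -/
theorem expected_phi2_bound (ℓ δ q : ℝ) (hℓ : 2 ≤ ℓ) (hδ : 0 ≤ δ)
    (hq0 : 0 ≤ q) (hq : q ≤ 1 / 2) :
    ℓ ^ (-(4 * δ)) + (1 - ℓ ^ (-(4 * δ))) * Real.exp q ≤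
      Real.exp (6 * q * δ * Real.log ℓ) := by
  have hℓ0 : (0 : ℝ) < ℓ := by linarith
  have hL : 0 ≤ Real.log ℓ := Real.log_nonneg (by linarith)
  set p := ℓ ^ (-(4 * δ)) with hp
  have hpdef : p = Real.exp (-(4 * δ) * Real.log ℓ) := by
    rw [hp, Real.rpow_def_of_pos hℓ0]; ring_nf
  have hppos : 0 < p := by rw [hpdef]; exact Real.exp_pos _
  have h1p : 1 - p ≤ 4 * δ * Real.log ℓ := by
    have := Real.add_one_le_exp (-(4 * δ) * Real.log ℓ)
    rw [← hpdef] at this; nlinarith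
  have hp1 : p ≤ 1 := by
    rw [hpdef]
    apply Real.exp_le_one_iff.mpr
    have : 0 ≤ 4 * δ * Real.log ℓ := by positivity
    linarith
  -- exp(1/2) < 7/4
  have hehalf : Real.exp (1/2) < 7/4 := by
    have h1 : Real.exp (1/2) * Real.exp (1/2) = Real.exp 1 := by
      rw [← Real.exp_add]; norm_num
    have h2 := Real.exp_one_lt_d9
    have h3 := Real.exp_pos (1/2 : ℝ)
    nlinarith
  -- exp q ≤ 1 + (3/2) q on [0, 1/2], by convexity
  have hexpq : Real.exp q ≤ 1 + (3/2) * q := by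
    have hconv := convexOn_exp.2 (Set.mem_univ (0 : ℝ)) (Set.mem_univ ((1:ℝ)/2))
      (show (0:ℝ) ≤ 1 - 2*q by linarith) (show (0:ℝ) ≤ 2*q by linarith)
      (show (1 - 2*q) + 2*q = 1 by ring)
    simp only [smul_eq_mul, mul_zero, zero_add, Real.exp_zero, mul_one] at hconv
    have : (2*q) * (1/2 : ℝ) = q := by ring
    rw [this] at hconv
    nlinarith [Real.exp_pos ((1:ℝ)/2)]
  have hkey : p + (1 - p) * Real.exp q ≤ Real.exp ((1 - p) * (Real.exp q - 1)) := by
    have := Real.add_one_le_exp ((1 - p) * (Real.exp q - 1))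
    nlinarith
  refine hkey.trans (Real.exp_le_exp.mpr ?_)
  have h1 : 0 ≤ 1 - p := by linarith
  have h2 : 0 ≤ Real.exp q - 1 := by
    have := Real.one_le_exp hq0; linarith
  have h3 : Real.exp q - 1 ≤ (3/2) * q := by linarith
  calc (1 - p) * (Real.exp q - 1) ≤ (4 * δ * Real.log ℓ) * ((3/2) * q) := by
        apply mul_le_mul h1p h3 h2 (by positivity)
    _ = 6 * q * δ * Real.log ℓ := by ring
end
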